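/- Consider boosting for T rounds in the setup below, where at each round t the margin vector m^t ∈ {−1, +1}^n is arbitrary, ε_t = Σ_{i : m^t_i = −1} q^t_i satisfies 0 < ε_t < 1, and α_t = (1/2)·ln((1 − ε_t)/ε_t). Suppose for each round t there is a distribution w^t ∈ Δ_n such that, with γ_t^(w) = (1/2)·Σ_{i=1}^n w^t_i m^t_i and δ_t = √( KL(w^t ‖ q^t) / 2 ), one has γ_t^(w) > δ_t. Then the fraction of training examples misclassified by the final ensemble satisfies (1/n)·Σ_{i=1}^n 𝟙[s_{T,i} ≤ 0] ≤ exp( −2 · Σ_{t=1}^T (γ_t^(w) − δ_t)^2 ), where 𝟙[s_{T,i} ≤ 0] is 1 if the final cumulative score of example i is nonpositive and 0 otherwise. -/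

import Mathlib

/-- Cumulative score of example `i` after `t` rounds: `s_{t,i} = Σ_{s=1}^t α_s · m^s_i`. -/
noncomputable def cumScore (n : ℕ) (m : ℕ → Fin n → ℝ) (α : ℕ → ℝ) (t : ℕ) (i : Fin n) : ℝ :=
  ∑ s ∈ Finset.Icc 1 t, α s * m s i

/-- Exponential loss after `t` rounds: `L_exp(f_t) = Σ_i exp(−s_{t,i})`. -/
noncomputable def expLoss (n : ℕ) (m : ℕ → Fin n → ℝ) (α : ℕ → ℝ) (t : ℕ) : ℝ :=
  ∑ i, Real.exp (-(cumScore n m α t i))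

/-- Exponential-weights distribution at round `t`:
`q^t_i = exp(−s_{t−1,i}) / L_exp(f_{t−1})`. -/
noncomputable def expWeights (n : ℕ) (m : ℕ → Fin n → ℝ) (α : ℕ → ℝ) (t : ℕ) (i : Fin n) : ℝ :=
  Real.exp (-(cumScore n m α (t - 1) i)) / expLoss n m α (t - 1)

/-- Kullback–Leibler divergence on the finite simplex
(with the convention `0 · ln 0 = 0`, which holds automatically since `0 * x = 0`). -/
noncomputable def klDiv (n : ℕ) (p q : Fin n → ℝ) : ℝ :=
  ∑ i, p i * Real.log (p i / q i)

/-!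
The exponential loss telescopes, `L_T = n ∏_t Z_t` with `Z_t = ∑ i, q^t_i exp (-α_t m^t_i)`,
and `𝟙[s ≤ 0] ≤ exp (-s)` bounds the training error by `L_T / n`. For the step
`α_t = ½ log ((1 - ε_t) / ε_t)` one gets `Z_t = 2 √(ε_t (1 - ε_t)) = √(1 - 4 γ_t²)`, where
`γ_t = ½ - ε_t` is the edge of the weak learner under `q^t`. Its edge under `w^t` differs from
`γ_t` by at most half the `ℓ¹` distance between `w^t` and `q^t`, which Pinsker's inequality bounds
by `δ_t`. Hence `γ_t ≥ γ_t^(w) - δ_t > 0` and `Z_t ≤ exp (-2 (γ_t^(w) - δ_t)²)`.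
-/

open Real Set Finset

lemma monotoneOn_add_one_mul_log_sub_two_mul :
    MonotoneOn (fun x : ℝ => (x + 1) * log x - 2 * (x - 1)) (Ioi 0) := by
  refine monotoneOn_of_hasDerivWithinAt_nonneg (f' := fun x => log x + (x + 1) * x⁻¹ - 2)
    (convex_Ioi 0) (by fun_prop (disch := intro x (hx : 0 < x); exact hx.ne')) ?_ ?_
  · intro x hx
    rw [interior_Ioi] at hx
    exact ((((hasDerivAt_id x).add_const 1).mul (hasDerivAt_log (ne_of_gt hx))).sub
      (((hasDerivAt_id x).sub_const 1).const_mul 2)).hasDerivWithinAt.congr_deriv (by simp)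
  · intro x hx
    rw [interior_Ioi] at hx
    have hx : 0 < x := hx
    have : (x + 1) * x⁻¹ = 1 + x⁻¹ := by field_simp
    linarith [one_sub_inv_le_log_of_pos hx]

lemma three_mul_sq_sub_one_le_klFun {x : ℝ} (hx : 0 ≤ x) :
    3 * (x - 1) ^ 2 ≤ 2 * (x + 2) * InformationTheory.klFun x := by
  open InformationTheory in
  rcases hx.eq_or_lt with rfl | hx
  · norm_num [klFun_zero]
  set F := fun x : ℝ => 2 * (x + 2) * klFun x - 3 * (x - 1) ^ 2
  have hF (y : ℝ) (hy : 0 < y) : HasDerivAt F (4 * ((y + 1) * log y - 2 * (y - 1))) y :=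
    ((((hasDerivAt_id y).add_const 2).const_mul 2).mul (hasDerivAt_klFun hy.ne')).sub
      ((((hasDerivAt_id y).sub_const 1).pow 2).const_mul 3) |>.congr_deriv
      (by simp [klFun]; ring)
  have hG := monotoneOn_add_one_mul_log_sub_two_mul
  have hmin : IsMinOn F (Ioi 0) 1 := by
    refine isMinOn_Ioi_of_deriv (hF 1 one_pos).continuousAt
      (fun y hy => (hF y hy.1).differentiableAt.differentiableWithinAt)
      (fun y hy => (hF y (one_pos.trans hy)).differentiableAt.differentiableWithinAt) ?_ ?_
    · intro y hy
      have := hG hy.1 (mem_Ioi.2 one_pos) hy.2.le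
      norm_num at this
      rw [(hF y hy.1).deriv]
      linarith
    · intro y hy
      have := hG (mem_Ioi.2 one_pos) (mem_Ioi.2 (one_pos.trans hy)) hy.le
      norm_num at this
      rw [(hF y (one_pos.trans hy)).deriv]
      linarith
  simpa [F, klFun_one] using hmin hx

lemma three_mul_sq_sub_le_mul_log_div {a b : ℝ} (ha : 0 ≤ a) (hb : 0 < b) :
    3 * (a - b) ^ 2 ≤ 2 * (a + 2 * b) * (a * log (a / b) - a + b) := by
  have hb' := hb.ne'
  calc 3 * (a - b) ^ 2 = b ^ 2 * (3 * (a / b - 1) ^ 2) := by field_simp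
    _ ≤ b ^ 2 * (2 * (a / b + 2) * InformationTheory.klFun (a / b)) := by
      gcongr b ^ 2 * ?_; exact three_mul_sq_sub_one_le_klFun (div_nonneg ha hb.le)
    _ = 2 * (a + 2 * b) * (a * log (a / b) - a + b) := by
      rw [InformationTheory.klFun_apply]; field_simp; ring

/-- Pinsker's inequality. The weights `p i + 2 * q i` fed to Sedrakyan's lemma are the ones of
the pointwise bound `three_mul_sq_sub_le_mul_log_div`. -/
theorem sq_sum_abs_sub_le_two_mul_klDiv {n : ℕ} {p q : Fin n → ℝ} (hp : ∀ i, 0 ≤ p i)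
    (hq : ∀ i, 0 < q i) (hp_sum : ∑ i, p i = 1) (hq_sum : ∑ i, q i = 1) :
    (∑ i, |p i - q i|) ^ 2 ≤ 2 * klDiv n p q := by
  have hpos (i : Fin n) : 0 < p i + 2 * q i := by linarith [hp i, hq i]
  have hmass : ∑ i, (p i + 2 * q i) = 3 := by
    rw [sum_add_distrib, ← mul_sum, hp_sum, hq_sum]; norm_num
  have hterm (i : Fin n) : |p i - q i| ^ 2 / (p i + 2 * q i)
      ≤ 2 / 3 * (p i * log (p i / q i) - p i + q i) := by
    rw [sq_abs, div_le_iff₀ (hpos i)]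
    linarith [three_mul_sq_sub_le_mul_log_div (hp i) (hq i)]
  have := (sq_sum_div_le_sum_sq_div univ (fun i => |p i - q i|) fun i _ => hpos i).trans
    (sum_le_sum fun i _ => hterm i)
  rw [hmass, ← mul_sum, sum_add_distrib, sum_sub_distrib, hp_sum, hq_sum] at this
  rw [klDiv]
  linarith

theorem sum_mul_sub_sum_mul_le_two_mul_sqrt_klDiv {n : ℕ} {p q m : Fin n → ℝ}
    (hp : ∀ i, 0 ≤ p i) (hq : ∀ i, 0 < q i) (hp_sum : ∑ i, p i = 1) (hq_sum : ∑ i, q i = 1)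
    (hm : ∀ i, |m i| ≤ 1) :
    ∑ i, p i * m i - ∑ i, q i * m i ≤ 2 * √(klDiv n p q / 2) := by
  have hl1 : ∑ i, p i * m i - ∑ i, q i * m i ≤ ∑ i, |p i - q i| := by
    rw [← sum_sub_distrib]
    refine sum_le_sum fun i _ => ?_
    calc p i * m i - q i * m i ≤ |(p i - q i) * m i| := by rw [← sub_mul]; exact le_abs_self _
      _ ≤ |p i - q i| := by
        rw [abs_mul]; exact mul_le_of_le_one_right (abs_nonneg _) (hm i)
  have hpinsker : (∑ i, |p i - q i|) / 2 ≤ √(klDiv n p q / 2) := by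
    refine le_sqrt_of_sq_le ?_
    linarith [sq_sum_abs_sub_le_two_mul_klDiv hp hq hp_sum hq_sum]
  linarith

lemma sum_mul_comp_of_forall_eq_neg_one_or_eq_one {ι : Type*} [Fintype ι] {q m : ι → ℝ}
    (f : ℝ → ℝ) (hm : ∀ i, m i = -1 ∨ m i = 1) (hq : ∑ i, q i = 1) :
    ∑ i, q i * f (m i) = (∑ i, if m i = -1 then q i else 0) * f (-1)
      + (1 - ∑ i, if m i = -1 then q i else 0) * f 1 := by
  have hterm (i : ι) : q i * f (m i) = (if m i = -1 then q i else 0) * f (-1)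
      + (q i - if m i = -1 then q i else 0) * f 1 := by
    rcases hm i with h | h <;> norm_num [h]
  simp only [hterm, sum_add_distrib, ← sum_mul, sum_sub_distrib, hq]

theorem half_sum_mul_sub_sqrt_klDiv_le {n : ℕ} {w q m : Fin n → ℝ}
    (hw : ∀ i, 0 ≤ w i) (hq : ∀ i, 0 < q i) (hw_sum : ∑ i, w i = 1) (hq_sum : ∑ i, q i = 1)
    (hm : ∀ i, m i = -1 ∨ m i = 1) :
    1 / 2 * ∑ i, w i * m i - √(klDiv n w q / 2) ≤ 1 / 2 - ∑ i, if m i = -1 then q i else 0 := by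
  have hq_edge := sum_mul_comp_of_forall_eq_neg_one_or_eq_one id hm hq_sum
  have := sum_mul_sub_sum_mul_le_two_mul_sqrt_klDiv (m := m) hw hq hw_sum hq_sum
    fun i => by rcases hm i with h | h <;> norm_num [h]
  simp only [id_eq, mul_neg, mul_one] at hq_edge
  linarith

lemma mul_exp_add_one_sub_mul_exp_neg {e a : ℝ} (he0 : 0 < e) (he1 : e < 1)
    (ha : a = 1 / 2 * log ((1 - e) / e)) :
    e * exp a + (1 - e) * exp (-a) = 2 * √(e * (1 - e)) := by
  have hsq : exp a ^ 2 = (1 - e) / e := by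
    rw [← exp_nat_mul, ha, Nat.cast_ofNat, ← mul_assoc, mul_one_div_cancel two_ne_zero, one_mul,
      exp_log (div_pos (by linarith) he0)]
  have hodds : 1 - e = e * exp a ^ 2 := by
    rw [hsq]; field_simp
  have hsqrt : √(e * (1 - e)) = e * exp a := by
    rw [sqrt_eq_iff_mul_self_eq_of_pos (by positivity), hodds]
    ring
  rw [hsqrt, exp_neg, hodds]
  field_simp
  ring

theorem two_mul_sqrt_mul_one_sub_le_exp {e g : ℝ} (hg : 0 ≤ g) (hge : g ≤ 1 / 2 - e) :
    2 * √(e * (1 - e)) ≤ exp (-2 * g ^ 2) := by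
  have h4 : 4 * (e * (1 - e)) ≤ exp (-2 * g ^ 2) ^ 2 := by
    rw [sq, ← exp_add, show -2 * g ^ 2 + -2 * g ^ 2 = -(4 * g ^ 2) by ring]
    nlinarith [add_one_le_exp (-(4 * g ^ 2))]
  calc 2 * √(e * (1 - e)) = √(4 * (e * (1 - e))) := by
        rw [show (4 : ℝ) = 2 ^ 2 by norm_num, sqrt_mul (by positivity) (e * (1 - e)),
          sqrt_sq two_pos.le]
    _ ≤ exp (-2 * g ^ 2) := sqrt_le_iff.2 ⟨(exp_pos _).le, h4⟩

section Boosting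

variable {n : ℕ} (m : ℕ → Fin n → ℝ) (α : ℕ → ℝ)

lemma cumScore_succ (t : ℕ) (i : Fin n) :
    cumScore n m α (t + 1) i = cumScore n m α t i + α (t + 1) * m (t + 1) i :=
  sum_Icc_succ_top (Nat.le_add_left 1 t) _

lemma sum_indicator_nonpos_le_expLoss (t : ℕ) :
    ∑ i, (if cumScore n m α t i ≤ 0 then (1 : ℝ) else 0) ≤ expLoss n m α t := by
  refine sum_le_sum fun i _ => ?_
  split_ifs with h
  · exact one_le_exp (neg_nonneg.2 h)
  · exact (exp_pos _).le

variable [NeZero n]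

lemma expLoss_pos (t : ℕ) : 0 < expLoss n m α t :=
  sum_pos (fun _ _ => exp_pos _) univ_nonempty

lemma expWeights_pos (t : ℕ) (i : Fin n) : 0 < expWeights n m α t i :=
  div_pos (exp_pos _) (expLoss_pos m α _)

lemma sum_expWeights (t : ℕ) : ∑ i, expWeights n m α t i = 1 := by
  simp only [expWeights, ← sum_div]
  exact div_self (expLoss_pos m α _).ne'

lemma expLoss_succ (t : ℕ) :
    expLoss n m α (t + 1)
      = expLoss n m α t * ∑ i, expWeights n m α (t + 1) i * exp (-(α (t + 1) * m (t + 1) i)) := by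
  simp only [expLoss, expWeights, Nat.add_sub_cancel, mul_sum, cumScore_succ, neg_add, exp_add]
  refine sum_congr rfl fun _ _ => ?_
  field_simp [(expLoss_pos m α t).ne']

lemma expLoss_eq_mul_prod (T : ℕ) :
    expLoss n m α T
      = n * ∏ t ∈ Finset.Icc 1 T, ∑ i, expWeights n m α t i * exp (-(α t * m t i)) := by
  induction T with
  | zero => simp [expLoss, cumScore]
  | succ T ih => rw [expLoss_succ, ih, prod_Icc_succ_top (Nat.le_add_left 1 T), mul_assoc]

lemma sum_expWeights_mul_exp_neg_eq {t : ℕ} {e : ℝ} (hm : ∀ i, m t i = -1 ∨ m t i = 1)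
    (he : e = ∑ i, if m t i = -1 then expWeights n m α t i else 0) (he0 : 0 < e) (he1 : e < 1)
    (hα : α t = 1 / 2 * log ((1 - e) / e)) :
    ∑ i, expWeights n m α t i * exp (-(α t * m t i)) = 2 * √(e * (1 - e)) := by
  rw [sum_mul_comp_of_forall_eq_neg_one_or_eq_one (fun x => exp (-(α t * x))) hm
    (sum_expWeights m α t), ← he]
  simp only [mul_neg, mul_one, neg_neg]
  exact mul_exp_add_one_sub_mul_exp_neg he0 he1 hα

end Boosting

/-- **Training error bound with fairness cost.**
Under the same hypotheses as the main theorem, the fraction of misclassified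
training examples (those with final cumulative score `s_{T,i} ≤ 0`) is at most
`exp(−2 · Σ_t (γ_t^(w) − δ_t)^2)`. -/
theorem fairproj_training_error_bound (n : ℕ) (hn : 1 ≤ n) (T : ℕ)
    (m : ℕ → Fin n → ℝ) (α : ℕ → ℝ) (ε : ℕ → ℝ) (w : ℕ → Fin n → ℝ)
    (γw δ : ℕ → ℝ)
    (hmargin : ∀ t ∈ Finset.Icc 1 T, ∀ i, m t i = -1 ∨ m t i = 1)
    (hε : ∀ t ∈ Finset.Icc 1 T,
      ε t = ∑ i, if m t i = -1 then expWeights n m α t i else 0)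
    (hε_pos : ∀ t ∈ Finset.Icc 1 T, 0 < ε t)
    (hε_lt : ∀ t ∈ Finset.Icc 1 T, ε t < 1)
    (hα : ∀ t ∈ Finset.Icc 1 T, α t = (1 / 2) * Real.log ((1 - ε t) / ε t))
    (hw_nonneg : ∀ t ∈ Finset.Icc 1 T, ∀ i, 0 ≤ w t i)
    (hw_sum : ∀ t ∈ Finset.Icc 1 T, ∑ i, w t i = 1)
    (hγw : ∀ t ∈ Finset.Icc 1 T, γw t = (1 / 2) * ∑ i, w t i * m t i)
    (hδ : ∀ t ∈ Finset.Icc 1 T,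
      δ t = Real.sqrt (klDiv n (w t) (expWeights n m α t) / 2))
    (hedge : ∀ t ∈ Finset.Icc 1 T, δ t < γw t) :
    (1 / n : ℝ) * ∑ i, (if cumScore n m α T i ≤ 0 then (1 : ℝ) else 0)
      ≤ Real.exp (-2 * ∑ t ∈ Finset.Icc 1 T, (γw t - δ t) ^ 2) := by
  have : NeZero n := ⟨by omega⟩
  have hround : ∀ t ∈ Finset.Icc 1 T,
      ∑ i, expWeights n m α t i * exp (-(α t * m t i)) ≤ exp (-2 * (γw t - δ t) ^ 2) := by
    intro t ht
    have hedge_gap := half_sum_mul_sub_sqrt_klDiv_le (hw_nonneg t ht) (expWeights_pos m α t)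
      (hw_sum t ht) (sum_expWeights m α t) (hmargin t ht)
    rw [← hγw t ht, ← hδ t ht, ← hε t ht] at hedge_gap
    rw [sum_expWeights_mul_exp_neg_eq m α (hmargin t ht) (hε t ht) (hε_pos t ht) (hε_lt t ht)
      (hα t ht)]
    exact two_mul_sqrt_mul_one_sub_le_exp (sub_nonneg.2 (hedge t ht).le) hedge_gap
  calc (1 / n : ℝ) * ∑ i, (if cumScore n m α T i ≤ 0 then (1 : ℝ) else 0)
      ≤ (1 / n : ℝ) * expLoss n m α T := by
        gcongr; exact sum_indicator_nonpos_le_expLoss m α T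
    _ = ∏ t ∈ Finset.Icc 1 T, ∑ i, expWeights n m α t i * exp (-(α t * m t i)) := by
        rw [expLoss_eq_mul_prod]; field_simp
    _ ≤ ∏ t ∈ Finset.Icc 1 T, exp (-2 * (γw t - δ t) ^ 2) :=
        prod_le_prod (fun t _ => sum_nonneg fun i _ =>
          mul_nonneg (expWeights_pos m α t i).le (exp_pos _).le) hround
    _ = exp (-2 * ∑ t ∈ Finset.Icc 1 T, (γw t - δ t) ^ 2) := by rw [mul_sum, exp_sum]
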